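/- For the type D_∞ quiver structure: suppose dim P(λ^(0)) = p₀, dim P(λ^(1)) = p₁, and dim P(λ^(i)) for i ≥ 2 satisfies K₁ i^{2m-1} ≤ p_i ≤ K₂ i^{2m-1}. Define D_d = Σ dim of summands of P_d as in the resolution (summands indexed by d+1, d-1, ..., ending in 2, or in 0 or 1). Then there exist K₁', K₂' > 0 with K₁' d^{2m} ≤ D_d ≤ K₂' d^{2m} for all d ≥ 1; consequently the rate of growth of {D_d} is 2m+1. -/

import Mathlib

/-!
The labels in `resSummands d` are at most `d + 1`, and at least `d / 4 + 1` of them, namely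
`d + 1, d - 1, …, d + 1 - 2 ⌊d / 4⌋`, are at least `d / 4`. Summing `p_i ≍ i ^ n` over them
therefore gives `D_d ≍ d ^ (n + 1)`, and a two-sided bound `D_d ≍ d ^ k` pins the rate of
growth at `k + 1`, since `d ^ k ≤ C d ^ (c - 1)` for all `d` forces `c ≥ k + 1`.
-/

/-- The labels of the indecomposable summands of the `d`-th term of the minimal projective
resolution of the trivial module (type `D_∞` block): for `d` odd they are `d+1, d-1, ..., 2`;
for `d ≡ 0 (mod 4)` they are `d+1, ..., 3, 0`; for `d ≡ 2 (mod 4)` they are `d+1, ..., 3, 1`. -/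
def resSummands (d : ℕ) : Finset ℕ :=
  if d % 2 = 1 then (Finset.range (d + 2)).filter (fun i => 2 ≤ i ∧ i % 2 = 0)
  else ((Finset.range (d + 2)).filter (fun i => 3 ≤ i ∧ i % 2 = 1)) ∪ {d % 4 / 2}

open Finset

lemma resSummands_subset_range (d : ℕ) : resSummands d ⊆ range (d + 2) := by
  intro i hi
  unfold resSummands at hi
  split at hi <;> simp only [mem_union, mem_filter, mem_range, mem_singleton] at hi <;>
    simp only [mem_range] <;> omega

lemma image_subset_resSummands {d : ℕ} (hd : 1 ≤ d) :
    (range (d / 4 + 1)).image (fun j => d + 1 - 2 * j) ⊆ resSummands d := by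
  intro i hi
  obtain ⟨j, hj, rfl⟩ := mem_image.mp hi
  rw [mem_range] at hj
  unfold resSummands
  split
  · simp only [mem_filter, mem_range]
    omega
  · refine mem_union_left _ ?_
    simp only [mem_filter, mem_range]
    omega

section SumBounds

variable {n : ℕ} {p : ℕ → ℝ} {K : ℝ}

lemma pow_succ_le_sum_resSummands (hK : 0 ≤ K) (hp0 : ∀ i, 0 ≤ p i)
    (hp : ∀ i : ℕ, 2 ≤ i → K * (i : ℝ) ^ n ≤ p i) {d : ℕ} (hd : 1 ≤ d) :
    K / 4 ^ (n + 1) * (d : ℝ) ^ (n + 1) ≤ ∑ i ∈ resSummands d, p i := by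
  set S := (range (d / 4 + 1)).image (fun j => d + 1 - 2 * j)
  have hcard : S.card = d / 4 + 1 := by
    rw [card_image_of_injOn, card_range]
    intro a ha b hb hab
    simp only [coe_range, Set.mem_Iio] at ha hb hab
    omega
  have hterm : ∀ i ∈ S, K * ((d : ℝ) / 4) ^ n ≤ p i := by
    intro i hi
    obtain ⟨j, hj, rfl⟩ := mem_image.mp hi
    rw [mem_range] at hj
    have hquarter : (d : ℝ) / 4 ≤ ((d + 1 - 2 * j : ℕ) : ℝ) := by
      rw [div_le_iff₀ (by norm_num)]
      exact_mod_cast (by omega : d ≤ (d + 1 - 2 * j) * 4)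
    exact (mul_le_mul_of_nonneg_left (by gcongr) hK).trans (hp _ (by omega))
  have hcount : (d : ℝ) / 4 ≤ S.card := by
    rw [hcard, div_le_iff₀ (by norm_num)]
    exact_mod_cast (by omega : d ≤ (d / 4 + 1) * 4)
  calc K / 4 ^ (n + 1) * (d : ℝ) ^ (n + 1) = (d : ℝ) / 4 * (K * ((d : ℝ) / 4) ^ n) := by
        rw [div_pow, pow_succ, pow_succ]
        field_simp
    _ ≤ S.card * (K * ((d : ℝ) / 4) ^ n) := by gcongr
    _ ≤ ∑ i ∈ S, p i := by simpa only [nsmul_eq_mul] using card_nsmul_le_sum S p _ hterm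
    _ ≤ ∑ i ∈ resSummands d, p i :=
        sum_le_sum_of_subset_of_nonneg (image_subset_resSummands hd) fun i _ _ => hp0 i

lemma sum_resSummands_le_pow_succ (hK : 0 ≤ K) (hp0 : ∀ i, 0 ≤ p i)
    (hp : ∀ i : ℕ, 2 ≤ i → p i ≤ K * (i : ℝ) ^ n) {d : ℕ} (hd : 1 ≤ d) :
    ∑ i ∈ resSummands d, p i ≤ 3 * (p 0 + p 1 + 2 ^ n * K) * (d : ℝ) ^ (n + 1) := by
  have hd1 : (1 : ℝ) ≤ d := by exact_mod_cast hd
  set M := p 0 + p 1 + 2 ^ n * K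
  have hM : 0 ≤ M := by have := hp0 0; have := hp0 1; positivity
  have hterm : ∀ i ∈ resSummands d, p i ≤ M * (d : ℝ) ^ n := by
    intro i hi
    have hid : i < d + 2 := mem_range.mp (resSummands_subset_range d hi)
    have hdn : 1 ≤ (d : ℝ) ^ n := one_le_pow₀ hd1
    rcases lt_or_ge i 2 with hi2 | hi2
    · calc p i ≤ p 0 + p 1 := by interval_cases i <;> linarith [hp0 0, hp0 1]
        _ ≤ M := le_add_of_nonneg_right (by positivity)
        _ ≤ M * (d : ℝ) ^ n := le_mul_of_one_le_right hM hdn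
    · calc p i ≤ K * (i : ℝ) ^ n := hp i hi2
        _ ≤ K * (2 * d : ℝ) ^ n := by
            gcongr
            exact_mod_cast (by omega : i ≤ 2 * d)
        _ = 2 ^ n * K * (d : ℝ) ^ n := by ring
        _ ≤ M * (d : ℝ) ^ n := by
            gcongr
            linarith [hp0 0, hp0 1]
  have hcard : ((resSummands d).card : ℝ) ≤ 3 * d := by
    have := card_le_card (resSummands_subset_range d)
    rw [card_range] at this
    have : ((resSummands d).card : ℝ) ≤ d + 2 := by exact_mod_cast this
    linarith
  calc ∑ i ∈ resSummands d, p i ≤ (resSummands d).card * (M * (d : ℝ) ^ n) := by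
        simpa only [nsmul_eq_mul] using sum_le_card_nsmul _ p _ hterm
    _ ≤ 3 * d * (M * (d : ℝ) ^ n) := by gcongr
    _ = 3 * M * (d : ℝ) ^ (n + 1) := by ring

end SumBounds

lemma add_one_le_of_pow_le_zpow {A C : ℝ} (hA : 0 < A) {k : ℕ} {c : ℤ}
    (h : ∀ d : ℕ, 1 ≤ d → A * (d : ℝ) ^ k ≤ C * (d : ℝ) ^ (c - 1)) : (k : ℤ) + 1 ≤ c := by
  by_contra! hc
  have hC : 0 ≤ C := by simpa using hA.le.trans (by simpa using h 1 le_rfl)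
  have hlinear : ∀ d : ℕ, 1 ≤ d → A * d ≤ C := by
    intro d hd
    have hd1 : (1 : ℝ) ≤ d := by exact_mod_cast hd
    have hdpos : (0 : ℝ) < d := by linarith
    have hzpow : (d : ℝ) ^ (c - 1) ≤ (d : ℝ) ^ ((k : ℤ) - 1) :=
      zpow_le_zpow_right₀ hd1 (by omega)
    have hsplit : (d : ℝ) ^ k = (d : ℝ) ^ ((k : ℤ) - 1) * d := by
      rw [← zpow_natCast, ← zpow_add_one₀ hdpos.ne', sub_add_cancel]
    have := (h d hd).trans (mul_le_mul_of_nonneg_left hzpow hC)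
    rw [hsplit] at this
    nlinarith [zpow_pos hdpos ((k : ℤ) - 1)]
  obtain ⟨d, hd⟩ := exists_nat_gt (max (C / A) 1)
  have hd1 : 1 ≤ d := by exact_mod_cast (le_max_right _ _).trans hd.le
  have := (div_lt_iff₀ hA).mp ((le_max_left _ _).trans_lt hd)
  linarith [hlinear d hd1]

lemma isLeast_growth_of_pow_bounds {a : ℕ → ℝ} {A B : ℝ} {k : ℕ} (hA : 0 < A) (hB : 0 < B)
    (h : ∀ d : ℕ, 1 ≤ d → A * (d : ℝ) ^ k ≤ a d ∧ a d ≤ B * (d : ℝ) ^ k) :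
    IsLeast {c : ℕ | ∃ C : ℝ, 0 < C ∧ ∀ d : ℕ, 1 ≤ d →
      a d ≤ C * (d : ℝ) ^ ((c : ℤ) - 1)} (k + 1) := by
  refine ⟨⟨B, hB, fun d hd => ?_⟩, fun c ⟨C, _, hC⟩ => ?_⟩
  · simpa using (h d hd).2
  · exact_mod_cast add_one_le_of_pow_le_zpow hA fun d hd => (h d hd).1.trans (hC d hd)

/-- If `dim P(λ^(i)) = p_i` satisfies `K₁ i^(2m-1) ≤ p_i ≤ K₂ i^(2m-1)` for `i ≥ 2`, and
`D_d = Σ` of the `p_i` over the summands of the `d`-th term of the resolution, then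
`K₁' d^(2m) ≤ D_d ≤ K₂' d^(2m)` for positive constants `K₁', K₂'`, and consequently the rate
of growth of `{D_d}` is `2m+1`. -/
theorem stmt14 (m : ℕ) (hm : 1 ≤ m) (p : ℕ → ℕ) (K₁ K₂ : ℝ) (h₁ : 0 < K₁) (h₂ : 0 < K₂)
    (h : ∀ i : ℕ, 2 ≤ i →
      K₁ * (i : ℝ) ^ (2 * m - 1) ≤ (p i : ℝ) ∧ (p i : ℝ) ≤ K₂ * (i : ℝ) ^ (2 * m - 1)) :
    (∃ K₁' K₂' : ℝ, 0 < K₁' ∧ 0 < K₂' ∧ ∀ d : ℕ, 1 ≤ d →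
      K₁' * (d : ℝ) ^ (2 * m) ≤ ((∑ i ∈ resSummands d, p i : ℕ) : ℝ) ∧
      ((∑ i ∈ resSummands d, p i : ℕ) : ℝ) ≤ K₂' * (d : ℝ) ^ (2 * m)) ∧
    IsLeast {c : ℕ | ∃ C : ℝ, 0 < C ∧ ∀ d : ℕ, 1 ≤ d →
      ((∑ i ∈ resSummands d, p i : ℕ) : ℝ) ≤ C * (d : ℝ) ^ ((c : ℤ) - 1)} (2 * m + 1) := by
  have hexp : 2 * m = 2 * m - 1 + 1 := by omega
  have hp0 : ∀ i, (0 : ℝ) ≤ p i := fun i => Nat.cast_nonneg _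
  have bounds : ∀ d : ℕ, 1 ≤ d →
      K₁ / 4 ^ (2 * m) * (d : ℝ) ^ (2 * m) ≤ ((∑ i ∈ resSummands d, p i : ℕ) : ℝ) ∧
      ((∑ i ∈ resSummands d, p i : ℕ) : ℝ) ≤
        3 * (p 0 + p 1 + 2 ^ (2 * m - 1) * K₂) * (d : ℝ) ^ (2 * m) := by
    intro d hd
    push_cast
    rw [hexp]
    exact ⟨pow_succ_le_sum_resSummands h₁.le hp0 (fun i hi => (h i hi).1) hd,
      sum_resSummands_le_pow_succ h₂.le hp0 (fun i hi => (h i hi).2) hd⟩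
  have hK₁' : 0 < K₁ / 4 ^ (2 * m) := by positivity
  have hK₂' : 0 < 3 * ((p 0 : ℝ) + p 1 + 2 ^ (2 * m - 1) * K₂) := by positivity
  exact ⟨⟨_, _, hK₁', hK₂', bounds⟩, isLeast_growth_of_pow_bounds hK₁' hK₂' bounds⟩
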